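/- arXiv:1602.00372 — 5 statements merged into one kernel-verified Lean document; each statement's English description precedes it below -/
import Mathlib

section
/- Consider two vehicles with states x_i = (λ_i, γ_i) and x_j = (λ_j, γ_j) at time t, where vehicle j has priority over i (λ_i − γ_i ≥ λ_j − γ_j and γ_i ≤ γ_j with at least one strict, and γ_i, γ_j ≥ 1). Suppose a schedule (binary charging decisions over stages t, t+1, …) charges i but not j at stage t, and at every stage k in {t+1, …, min(β_i, β_j) − 1} it never charges j without also charging i. Then the interchanged schedule—which at stage t charges j instead of i and is otherwise identical—yields residuals ρ̄_i = ρ_i + 1 and ρ̄_j = ρ_j − 1 at the respective deadlines, where ρ_i < ρ_j, and hence for any convex penalty q with nonnegative nondecreasing increments, q(ρ̄_i) + q(ρ̄_j) ≤ q(ρ_i) + q(ρ_j). -/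
lemma q_incr_mono (q : ℕ → ℝ)
    (hq : ∀ n : ℕ, 1 ≤ n → 0 ≤ q n - q (n - 1) ∧ q n - q (n - 1) ≤ q (n + 1) - q n) :
    ∀ m n : ℕ, 1 ≤ m → m ≤ n → q m - q (m - 1) ≤ q n - q (n - 1) := by
  intro m n hm hmn
  induction n, hmn using Nat.le_induction with
  | base => exact le_rfl
  | succ n hn ih =>
    have h := (hq n (le_trans hm hn)).2
    have : q n - q (n-1) ≤ q (n+1) - q ((n+1)-1) := by
      simpa using h
    linarith




/-- Interchange at stage `t`: vehicle `j` has priority over `i`, the schedule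
`(ai, aj)` charges `i` but not `j` at stage `t` and never charges `j` without
also charging `i` before `min(β_i, β_j)`. The interchanged schedule (charging
`j` instead of `i` at stage `t`, identical otherwise) yields residuals
`ρ̄_i = ρ_i + 1` and `ρ̄_j = ρ_j - 1` with `ρ_i < ρ_j`, hence for any convex
penalty `q` the total penalty does not increase. -/
theorem interchange_residuals
    (t lami gami lamj gamj : ℕ) (ai aj : ℕ → ℕ)
    (q : ℕ → ℝ) (hq0 : q 0 = 0)
    (hq : ∀ n : ℕ, 1 ≤ n → 0 ≤ q n - q (n - 1) ∧ q n - q (n - 1) ≤ q (n + 1) - q n)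
    (hlami : 1 ≤ lami) (hlamj : 1 ≤ lamj)
    (hgi : 1 ≤ gami) (hgj : 1 ≤ gamj)
    (hθ : (lami : ℤ) - gami ≥ (lamj : ℤ) - gamj) (hγ : gami ≤ gamj)
    (hstrict : (lami : ℤ) - gami > (lamj : ℤ) - gamj ∨ gami < gamj)
    (hbini : ∀ k, ai k ≤ 1) (hbinj : ∀ k, aj k ≤ 1)
    (hit : ai t = 1) (hjt : aj t = 0)
    (hnever : ∀ k, t < k → k < min (t + lami) (t + lamj) → aj k ≤ ai k)
    (hdeadi : ∀ k, t + lami ≤ k → ai k = 0) (hdeadj : ∀ k, t + lamj ≤ k → aj k = 0)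
    (hfeasi : ∑ k ∈ Finset.Ico t (t + lami), ai k ≤ gami)
    (hfeasj : ∑ k ∈ Finset.Ico t (t + lamj), aj k ≤ gamj) :
    -- residuals of the original schedule
    let ρi := gami - ∑ k ∈ Finset.Ico t (t + lami), ai k
    let ρj := gamj - ∑ k ∈ Finset.Ico t (t + lamj), aj k
    -- the interchanged schedule
    let bi : ℕ → ℕ := fun k => if k = t then 0 else ai k
    let bj : ℕ → ℕ := fun k => if k = t then 1 else aj k
    let ρi' := gami - ∑ k ∈ Finset.Ico t (t + lami), bi k
    let ρj' := gamj - ∑ k ∈ Finset.Ico t (t + lamj), bj k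
    ρi < ρj ∧ ρi' = ρi + 1 ∧ ρj' = ρj - 1 ∧ q ρi' + q ρj' ≤ q ρi + q ρj := by
  intro ρi ρj bi bj ρi' ρj'
  have ht1 : t < t + lami := by omega
  have ht2 : t < t + lamj := by omega
  set A := ∑ k ∈ Finset.Ico (t+1) (t + lami), ai k with hA
  set B := ∑ k ∈ Finset.Ico (t+1) (t + lamj), aj k with hB
  have hSi : ∑ k ∈ Finset.Ico t (t + lami), ai k = 1 + A := by
    rw [Finset.sum_eq_sum_Ico_succ_bot ht1, hit]
  have hSj : ∑ k ∈ Finset.Ico t (t + lamj), aj k = B := by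
    rw [Finset.sum_eq_sum_Ico_succ_bot ht2, hjt, zero_add]
  have hbiA : ∑ k ∈ Finset.Ico t (t + lami), bi k = A := by
    rw [Finset.sum_eq_sum_Ico_succ_bot ht1]
    have : bi t = 0 := if_pos rfl
    rw [this]
    simp only [zero_add]
    refine Finset.sum_congr rfl ?_
    intro k hk
    have : k ≠ t := by
      have := (Finset.mem_Ico.mp hk).1; omega
    simp [bi, this]
  have hbjB : ∑ k ∈ Finset.Ico t (t + lamj), bj k = 1 + B := by
    rw [Finset.sum_eq_sum_Ico_succ_bot ht2]
    have : bj t = 1 := if_pos rfl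
    rw [this]
    congr 1
    refine Finset.sum_congr rfl ?_
    intro k hk
    have : k ≠ t := by
      have := (Finset.mem_Ico.mp hk).1; omega
    simp [bj, this]
  have hfi : 1 + A ≤ gami := by rw [← hSi]; exact hfeasi
  have hfj : B ≤ gamj := by rw [← hSj]; exact hfeasj
  -- key inequality : ρi < ρj
  have hlt : ρi < ρj := by
    rcases le_or_gt lami lamj with h | h
    · -- B ≤ A + (lamj - lami)
      have hsplit : B = (∑ k ∈ Finset.Ico (t+1) (t + lami), aj k)
          + ∑ k ∈ Finset.Ico (t + lami) (t + lamj), aj k := by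
        rw [hB, Finset.sum_Ico_consecutive]
        · omega
        · omega
      have h1 : (∑ k ∈ Finset.Ico (t+1) (t + lami), aj k) ≤ A := by
        apply Finset.sum_le_sum
        intro k hk
        have hk' := Finset.mem_Ico.mp hk
        exact hnever k (by omega) (by omega)
      have h2 : (∑ k ∈ Finset.Ico (t + lami) (t + lamj), aj k) ≤ lamj - lami := by
        calc (∑ k ∈ Finset.Ico (t + lami) (t + lamj), aj k)
            ≤ ∑ k ∈ Finset.Ico (t + lami) (t + lamj), 1 :=
              Finset.sum_le_sum fun k _ => hbinj k
          _ = lamj - lami := by simp [Nat.card_Ico]; omega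
      have hBle : B ≤ A + (lamj - lami) := by omega
      have hθ' : lamj + gami ≤ lami + gamj := by omega
      show gami - (∑ k ∈ Finset.Ico t (t + lami), ai k)
          < gamj - (∑ k ∈ Finset.Ico t (t + lamj), aj k)
      rw [hSi, hSj]; omega
    · -- lamj < lami : B ≤ A
      have h1 : B ≤ A := by
        calc B ≤ ∑ k ∈ Finset.Ico (t+1) (t + lamj), ai k := by
              apply Finset.sum_le_sum
              intro k hk
              have hk' := Finset.mem_Ico.mp hk
              exact hnever k (by omega) (by omega)
          _ ≤ A := Finset.sum_le_sum_of_subset (Finset.Ico_subset_Ico le_rfl (by omega))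
      show gami - (∑ k ∈ Finset.Ico t (t + lami), ai k)
          < gamj - (∑ k ∈ Finset.Ico t (t + lamj), aj k)
      rw [hSi, hSj]; omega
  have hρi : ρi = gami - (1 + A) := by
    show gami - (∑ k ∈ Finset.Ico t (t + lami), ai k) = _; rw [hSi]
  have hρj : ρj = gamj - B := by
    show gamj - (∑ k ∈ Finset.Ico t (t + lamj), aj k) = _; rw [hSj]
  have hρi' : ρi' = ρi + 1 := by
    show gami - (∑ k ∈ Finset.Ico t (t + lami), bi k) = ρi + 1
    rw [hbiA, hρi]; omega
  have hρj' : ρj' = ρj - 1 := by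
    show gamj - (∑ k ∈ Finset.Ico t (t + lamj), bj k) = ρj - 1
    rw [hbjB, hρj]; omega
  refine ⟨hlt, hρi', hρj', ?_⟩
  rw [hρi', hρj']
  have hmono := q_incr_mono q hq (ρi + 1) ρj (by omega) (by omega)
  have e1 : (ρi + 1) - 1 = ρi := by omega
  rw [e1] at hmono
  linarith
end

section
/- Let vehicle j have priority over vehicle i at stage t in the sense θ_i ≥ θ_j, γ_i ≤ γ_j, with at least one strict inequality and γ_i ≥ 1. Suppose a schedule charges i but not j at stage t, and there is a later stage w at which it charges j but not i, such that for every stage in t+1, …, w−1 at which j is charged, i is also charged. Then at every stage k ∈ {t+1, …, w−1} at which j is charged, γ_{j,k} > γ_{i,k} ≥ 1; hence the interchanged schedule that decrements j's charging at those stages by matching the original j-decisions remains feasible (j's adjusted remaining processing time stays ≥ 1 when charged). -/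
/-- Before the first stage `w` at which the original schedule charges `j` but not
`i`, whenever `j` is charged at a stage `k ∈ {t+1,…,w-1}` we have
`γ_{j,k} > γ_{i,k} ≥ 1`; hence `γ_{j,k} - 1 ≥ 1`, so the interchanged schedule
can feasibly charge `j` whenever the original one does. -/
theorem interchange_feasible_before_w
    (t w lami gami lamj gamj : ℕ) (ai aj : ℕ → ℕ)
    (hgi : 1 ≤ gami)
    (hθ : (lami : ℤ) - gami ≥ (lamj : ℤ) - gamj) (hγ : gami ≤ gamj)
    (hstrict : (lami : ℤ) - gami > (lamj : ℤ) - gamj ∨ gami < gamj)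
    (hbini : ∀ k, ai k ≤ 1) (hbinj : ∀ k, aj k ≤ 1)
    (hit : ai t = 1) (hjt : aj t = 0)
    (htw : t < w) (hwj : aj w = 1) (hwi : ai w = 0)
    (hbetween : ∀ k, t < k → k < w → aj k ≤ ai k)
    (hfeasi : ∀ k, ai k = 1 → 1 ≤ gami - ∑ m ∈ Finset.Ico t k, ai m)
    (hfeasj : ∀ k, aj k = 1 → 1 ≤ gamj - ∑ m ∈ Finset.Ico t k, aj m) :
    ∀ k, t < k → k < w → aj k = 1 →
      1 ≤ gami - ∑ m ∈ Finset.Ico t k, ai m ∧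
      gami - ∑ m ∈ Finset.Ico t k, ai m < gamj - ∑ m ∈ Finset.Ico t k, aj m ∧
      2 ≤ gamj - ∑ m ∈ Finset.Ico t k, aj m := by
  intro k htk hkw hjk
  have hik : ai k = 1 := by
    have := hbetween k htk hkw
    have := hbini k
    omega
  have h1 : 1 ≤ gami - ∑ m ∈ Finset.Ico t k, ai m := hfeasi k hik
  have hSi : ∑ m ∈ Finset.Ico t k, ai m < gami := by omega
  have hsum : (∑ m ∈ Finset.Ico t k, aj m) + 1 ≤ ∑ m ∈ Finset.Ico t k, ai m := by
    rw [Finset.sum_eq_sum_Ico_succ_bot htk, Finset.sum_eq_sum_Ico_succ_bot htk,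
      hit, hjt]
    have : ∑ m ∈ Finset.Ico (t + 1) k, aj m ≤ ∑ m ∈ Finset.Ico (t + 1) k, ai m := by
      apply Finset.sum_le_sum
      intro m hm
      rw [Finset.mem_Ico] at hm
      exact hbetween m (by omega) (by omega)
    omega
  refine ⟨h1, ?_, ?_⟩ <;> omega
end

section
/- Let vehicle j have priority over vehicle i at stage t with deadline β_j > β_i. Suppose a schedule charges i but not j at stage t and, through stage β_i − 1, never charges j without charging i. Then for every stage k ∈ {β_i, …, β_j − 1}, the laxity of vehicle j satisfies θ_{j,k} < 0, and in particular γ_{j,k} − 1 ≥ 1 so the interchanged schedule (which has charged j one extra unit at stage t) can feasibly charge j whenever the original schedule does. -/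
/-- If `j` has priority over `i` at stage `t` with a later deadline
(`β_j = t + λ_j > β_i = t + λ_i`), the schedule charges `i` but not `j` at `t`,
and never charges `j` without charging `i` through stage `β_i - 1`, then at
every stage `k ∈ {β_i, …, β_j - 1}` the laxity of `j` is negative
(`λ_{j,k} < γ_{j,k}`) and in particular `γ_{j,k} ≥ 2`, so the interchanged
schedule can feasibly charge `j` whenever the original one does. -/
theorem laxity_negative_past_other_deadline
    (t lami gami lamj gamj : ℕ) (ai aj : ℕ → ℕ)
    (hgi : 1 ≤ gami) (hlami : 1 ≤ lami)
    (hθ : (lami : ℤ) - gami ≥ (lamj : ℤ) - gamj) (hγ : gami ≤ gamj)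
    (hstrict : (lami : ℤ) - gami > (lamj : ℤ) - gamj ∨ gami < gamj)
    (hβ : lami < lamj)
    (hbini : ∀ k, ai k ≤ 1) (hbinj : ∀ k, aj k ≤ 1)
    (hit : ai t = 1) (hjt : aj t = 0)
    (hnever : ∀ k, t < k → k < t + lami → aj k ≤ ai k)
    (hfeasi : ∀ k, ai k = 1 → k < t + lami ∧ 1 ≤ gami - ∑ m ∈ Finset.Ico t k, ai m)
    (hfeasj : ∀ k, aj k = 1 → k < t + lamj ∧ 1 ≤ gamj - ∑ m ∈ Finset.Ico t k, aj m) :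
    ∀ k, t + lami ≤ k → k < t + lamj →
      ((t + lamj : ℤ) - k) - ((gamj : ℤ) - ∑ m ∈ Finset.Ico t k, (aj m : ℤ)) < 0 ∧
      2 ≤ gamj - ∑ m ∈ Finset.Ico t k, aj m := by
  intro k hk1 hk2
  -- the total charge given to i never exceeds gami
  have hAi : ∀ N, ∑ m ∈ Finset.Ico t N, ai m ≤ gami := by
    intro N
    induction N with
    | zero => simp
    | succ N ih =>
      rcases le_or_gt (N + 1) t with h | h
      · rw [Finset.Ico_eq_empty (by omega)]; simp
      · rw [Finset.sum_Ico_succ_top (by omega : t ≤ N)]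
        rcases Nat.eq_zero_or_pos (ai N) with h0 | h1
        · omega
        · have haN : ai N = 1 := le_antisymm (hbini N) h1
          have hf := (hfeasi N haN).2
          omega
  -- split sums at t
  have hsi : ∑ m ∈ Finset.Ico t (t + lami), ai m
      = ai t + ∑ m ∈ Finset.Ico (t + 1) (t + lami), ai m :=
    Finset.sum_eq_sum_Ico_succ_bot (by omega) _
  have hsj : ∑ m ∈ Finset.Ico t (t + lami), aj m
      = aj t + ∑ m ∈ Finset.Ico (t + 1) (t + lami), aj m :=
    Finset.sum_eq_sum_Ico_succ_bot (by omega) _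
  have hle : ∑ m ∈ Finset.Ico (t + 1) (t + lami), aj m
      ≤ ∑ m ∈ Finset.Ico (t + 1) (t + lami), ai m := by
    apply Finset.sum_le_sum
    intro m hm
    rw [Finset.mem_Ico] at hm
    exact hnever m (by omega) hm.2
  have hB : ∑ m ∈ Finset.Ico t (t + lami), aj m + 1
      ≤ ∑ m ∈ Finset.Ico t (t + lami), ai m := by
    rw [hsi, hsj, hit, hjt]; omega
  -- split sum for j at t + lami
  have hsplit : ∑ m ∈ Finset.Ico t (t + lami), aj m
      + ∑ m ∈ Finset.Ico (t + lami) k, aj m = ∑ m ∈ Finset.Ico t k, aj m :=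
    Finset.sum_Ico_consecutive _ (by omega) hk1
  have htail : ∑ m ∈ Finset.Ico (t + lami) k, aj m ≤ k - (t + lami) := by
    calc ∑ m ∈ Finset.Ico (t + lami) k, aj m
        ≤ ∑ _m ∈ Finset.Ico (t + lami) k, 1 := Finset.sum_le_sum fun m _ => hbinj m
      _ = k - (t + lami) := by rw [Finset.sum_const, Nat.card_Ico, smul_eq_mul, mul_one]
  have hAi' := hAi (t + lami)
  have hcast : ∑ m ∈ Finset.Ico t k, ((aj m : ℤ))
      = ((∑ m ∈ Finset.Ico t k, aj m : ℕ) : ℤ) := by push_cast; ring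
  rw [hcast]
  omega
end

section
/- Consider two schedules for a finite set of vehicles over stages t, …, t+W that charge the same total number of vehicles at every stage (A_k = Ā_k for all k) and produce, for each vehicle, residual demands ρ and ρ̄ at the deadlines such that the multiset {ρ̄_v} is obtained from {ρ_v} by transferring one unit from a vehicle with strictly larger residual to one with strictly smaller residual. Then for any cost of the form Σ_k C(A_k, s_k) + Σ_v q(ρ_v) with q having nonnegative nondecreasing increments, the second schedule's total cost is no greater than the first's. -/
/-!
Since the aggregate charging profiles coincide, only the residual penalties differ, and only at
`u` and `v`. Moving one unit from `ρ u` down to `ρ u - 1` saves the increment of `q` at `ρ u`,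
moving `ρ v` up to `ρ v + 1` costs the increment at `ρ v + 1 ≤ ρ u`, and increments of `q`
are nondecreasing.
-/

open Finset

section Increment

variable {M : Type*} [AddCommGroup M] [PartialOrder M] [IsOrderedAddMonoid M] {q : ℕ → M}

lemma monotone_increment_of_le_succ (hq : ∀ n : ℕ, 1 ≤ n → q n - q (n - 1) ≤ q (n + 1) - q n) :
    Monotone fun n => q (n + 1) - q n :=
  monotone_nat_of_le_succ fun n => by simpa using hq (n + 1) (by omega)

lemma add_le_add_of_monotone_increment (hq : Monotone fun n => q (n + 1) - q n)
    {a b : ℕ} (hab : a < b) : q (b - 1) + q (a + 1) ≤ q b + q a := by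
  obtain ⟨c, rfl⟩ : ∃ c, b = c + 1 := ⟨b - 1, by omega⟩
  have : q (a + 1) - q a ≤ q (c + 1) - q c := hq (by omega)
  rw [Nat.add_sub_cancel]
  rwa [sub_le_sub_iff, add_comm (q (a + 1))] at this

end Increment

lemma Fintype.sum_le_sum_of_eq_off_pair {V M : Type*} [Fintype V] [AddCommMonoid M]
    [PartialOrder M] [IsOrderedAddMonoid M] {f g : V → M} {u v : V}
    (huv : u ≠ v) (hpair : f u + f v ≤ g u + g v)
    (hother : ∀ w, w ≠ u → w ≠ v → f w = g w) :
    ∑ w, f w ≤ ∑ w, g w := by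
  classical
  rw [← sum_add_sum_compl {u, v} f, ← sum_add_sum_compl {u, v} g, sum_pair huv, sum_pair huv]
  have hrest : ∑ w ∈ ({u, v} : Finset V)ᶜ, f w = ∑ w ∈ ({u, v} : Finset V)ᶜ, g w :=
    Finset.sum_congr rfl fun w hw => by
      simp only [mem_compl, mem_insert, mem_singleton, not_or] at hw
      exact hother w hw.1 hw.2
  rw [hrest]
  exact add_le_add_left hpair _

theorem transfer_reduces_total_cost_general {V S : Type*} [Fintype V]
    (C : ℕ → S → ℝ) (q : ℕ → ℝ)
    (hq : ∀ n : ℕ, 1 ≤ n → 0 ≤ q n - q (n - 1) ∧ q n - q (n - 1) ≤ q (n + 1) - q n)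
    (t W : ℕ) (A A' : ℕ → ℕ) (s : ℕ → S)
    (hA : ∀ k, t ≤ k → k ≤ t + W → A k = A' k)
    (ρ ρ' : V → ℕ) (u v : V) (huv : u ≠ v) (hlt : ρ v < ρ u)
    (hu : ρ' u = ρ u - 1) (hv : ρ' v = ρ v + 1)
    (hother : ∀ w : V, w ≠ u → w ≠ v → ρ' w = ρ w) :
    (∑ k ∈ Finset.Icc t (t + W), C (A' k) (s k)) + ∑ x : V, q (ρ' x) ≤
      (∑ k ∈ Finset.Icc t (t + W), C (A k) (s k)) + ∑ x : V, q (ρ x) := by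
  have hcharge : ∑ k ∈ Icc t (t + W), C (A' k) (s k) = ∑ k ∈ Icc t (t + W), C (A k) (s k) :=
    sum_congr rfl fun k hk => by
      obtain ⟨hk₁, hk₂⟩ := mem_Icc.mp hk
      rw [hA k hk₁ hk₂]
  have hpair : q (ρ' u) + q (ρ' v) ≤ q (ρ u) + q (ρ v) := by
    rw [hu, hv]
    exact add_le_add_of_monotone_increment
      (monotone_increment_of_le_succ fun n hn => (hq n hn).2) hlt
  rw [hcharge]
  exact add_le_add_right (Fintype.sum_le_sum_of_eq_off_pair (f := fun x => q (ρ' x)) huv hpair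
    fun w hwu hwv => by rw [hother w hwu hwv]) _

/-- If two schedules charge the same aggregate number of vehicles at every stage
of the window, and the residuals of the second are obtained from those of the
first by transferring one unit from a vehicle `u` with strictly larger residual
to a vehicle `v` with strictly smaller residual, then for any charging cost
`C(A, s)` and any penalty `q` with nonnegative nondecreasing increments, the
second schedule's total cost is no greater. -/
theorem transfer_reduces_total_cost {V S : Type*} [Fintype V] [DecidableEq V]
    (C : ℕ → S → ℝ) (q : ℕ → ℝ) (hq0 : q 0 = 0)
    (hq : ∀ n : ℕ, 1 ≤ n → 0 ≤ q n - q (n - 1) ∧ q n - q (n - 1) ≤ q (n + 1) - q n)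
    (t W : ℕ) (A A' : ℕ → ℕ) (s : ℕ → S)
    (hA : ∀ k, t ≤ k → k ≤ t + W → A k = A' k)
    (ρ ρ' : V → ℕ) (u v : V) (huv : u ≠ v) (hlt : ρ v < ρ u)
    (hu : ρ' u = ρ u - 1) (hv : ρ' v = ρ v + 1)
    (hother : ∀ w : V, w ≠ u → w ≠ v → ρ' w = ρ w) :
    (∑ k ∈ Finset.Icc t (t + W), C (A' k) (s k)) + ∑ x : V, q (ρ' x) ≤
      (∑ k ∈ Finset.Icc t (t + W), C (A k) (s k)) + ∑ x : V, q (ρ x) :=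
  transfer_reduces_total_cost_general C q hq t W A A' s hA ρ ρ' u v huv hlt hu hv hother
end

section
/- Under the earliest-deadline-first tie-breaking that ignores remaining processing time, there exists an instance with two vehicles and three stages in which EDF is strictly suboptimal: with vehicle states x₁ = (2,1) and x₂ = (3,2) at stage 0, charging costs C(A₀)=A₀ at stage 0, 0 at stage 1, and 2·A₂ at stage 2, and penalty large enough that both requests must be completed, the unique minimum-cost feasible completion schedule charges vehicle 2 (only) at stage 0 and both vehicles at stage 1, with total cost 1, whereas the EDF schedule that charges vehicle 1 at stage 0 and vehicle 2 at stages 1 and 2 incurs total cost 3. -/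
/-- Total charging cost of a three-stage schedule for two vehicles: stage-0 cost
equals the number charged, stage-1 cost is zero, stage-2 cost is twice the
number charged. -/
def cost19 (σ1 σ2 : Fin 3 → ℕ) : ℕ := (σ1 0 + σ2 0) + 2 * (σ1 2 + σ2 2)

/-- A completion schedule: binary decisions, vehicle 1 (state `(2,1)`) is fully
charged within its 2 stages, vehicle 2 (state `(3,2)`) within its 3 stages. -/
def Completion19 (σ1 σ2 : Fin 3 → ℕ) : Prop :=
  (∀ s, σ1 s ≤ 1) ∧ (∀ s, σ2 s ≤ 1) ∧ σ1 2 = 0 ∧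
    σ1 0 + σ1 1 = 1 ∧ σ2 0 + σ2 1 + σ2 2 = 2

/-- EDF is strictly suboptimal on the two-vehicle instance: the schedule that
charges vehicle 2 only at stage 0 and both vehicles at stage 1 is the unique
minimum-cost completion schedule with cost 1, while the EDF schedule (vehicle 1
at stage 0, vehicle 2 at stages 1 and 2) is a completion schedule of cost 3. -/
theorem edf_strictly_suboptimal :
    Completion19 ![0, 1, 0] ![1, 1, 0] ∧ cost19 ![0, 1, 0] ![1, 1, 0] = 1 ∧
    (∀ σ1 σ2 : Fin 3 → ℕ, Completion19 σ1 σ2 → 1 ≤ cost19 σ1 σ2) ∧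
    (∀ σ1 σ2 : Fin 3 → ℕ, Completion19 σ1 σ2 → cost19 σ1 σ2 = 1 →
      σ1 = ![0, 1, 0] ∧ σ2 = ![1, 1, 0]) ∧
    Completion19 ![1, 0, 0] ![0, 1, 1] ∧ cost19 ![1, 0, 0] ![0, 1, 1] = 3 := by
  refine ⟨⟨?_, ?_, rfl, rfl, rfl⟩, rfl, ?_, ?_, ⟨?_, ?_, rfl, rfl, rfl⟩, rfl⟩
  · intro s; fin_cases s <;> simp
  · intro s; fin_cases s <;> simp
  · rintro σ1 σ2 ⟨h1, h2, h3, h4, h5⟩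
    have := h1 1; have := h2 1; unfold cost19; omega
  · rintro σ1 σ2 ⟨h1, h2, h3, h4, h5⟩ hc
    have a1 := h1 0; have a2 := h1 1; have b1 := h2 0; have b2 := h2 1; have b3 := h2 2
    unfold cost19 at hc
    constructor <;> (funext s; fin_cases s <;> simp <;> omega)
  · intro s; fin_cases s <;> simp
  · intro s; fin_cases s <;> simp
end
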